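/- arXiv:2109.12889 — 2 statements merged into one kernel-verified Lean document; each statement's English description precedes it below -/
import Mathlib

section
/- On the q^{2k-n} weight space of V_1^{⊗n}, the divided power operators satisfy E^(k) F^(k) E^(k) F^(k) = \binom{n}{k}_q · E^(k) F^(k), where \binom{n}{k}_q is the quantum binomial coefficient. -/
noncomputable section

open Finset

/-- The base field ℂ(q). -/
abbrev Fq : Type := RatFunc ℂ

/-- The variable q. -/
def q : Fq := RatFunc.X

/-- Quantum integer [k] = ∑_{j=0}^{k-1} q^{k-2j-1}. -/
def qint (k : ℕ) : Fq := ∑ j ∈ Finset.range k, q ^ ((k : ℤ) - 2 * j - 1)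

/-- Quantum factorial [k]!. -/
def qfact (k : ℕ) : Fq := ∏ j ∈ Finset.range k, qint (j + 1)

/-- Quantum binomial coefficient. -/
def qbinom (n k : ℕ) : Fq := qfact n / (qfact k * qfact (n - k))

/-- The n-th tensor power V₁^{⊗n} of the 2-dimensional simple module, modelled
as coefficient functions on the standard basis {v_a : a ∈ {0,1}^n}. -/
abbrev V (n : ℕ) : Type := (Fin n → Fin 2) → Fq

/-- weight contribution of a single tensor factor -/
def wtc (a : Fin 2) : ℤ := 2 * (a : ℤ) - 1

/-- total weight of a basis vector -/
def wt {n : ℕ} (b : Fin n → Fin 2) : ℤ := ∑ i, wtc (b i)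

/-- Action of E on V₁^{⊗n} via iterated comultiplication Δ(E)=1⊗E+E⊗K⁻¹. -/
def Eop {n : ℕ} (x : V n) : V n := fun b =>
  ∑ i : Fin n, if b i = 1 then
    q ^ (-(∑ j ∈ Finset.univ.filter (fun j => i < j), wtc (b j))) *
      x (Function.update b i 0)
  else 0

/-- Action of F on V₁^{⊗n} via iterated comultiplication Δ(F)=K⊗F+F⊗1. -/
def Fop {n : ℕ} (x : V n) : V n := fun b =>
  ∑ i : Fin n, if b i = 0 then
    q ^ (∑ j ∈ Finset.univ.filter (fun j => j < i), wtc (b j)) *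
      x (Function.update b i 1)
  else 0

/-- Action of K on V₁^{⊗n}. -/
def Kop {n : ℕ} (x : V n) : V n := fun b => q ^ (wt b) * x b

/-- Action of K⁻¹ on V₁^{⊗n}. -/
def Kinv {n : ℕ} (x : V n) : V n := fun b => q ^ (-(wt b)) * x b

/-- Divided power E^{(k)} = E^k/[k]!. -/
def Ediv {n : ℕ} (k : ℕ) (x : V n) : V n := fun b => (qfact k)⁻¹ * (Eop^[k] x) b

/-- Divided power F^{(k)} = F^k/[k]!. -/
def Fdiv {n : ℕ} (k : ℕ) (x : V n) : V n := fun b => (qfact k)⁻¹ * (Fop^[k] x) b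

/-- Projection 1_λ onto the q^λ-eigenspace of K. -/
def proj {n : ℕ} (lam : ℤ) (x : V n) : V n := fun b => if wt b = lam then x b else 0

/-- The operator p_{k,n} = E^{(k)}F^{(k)} / [n choose k]. -/
def pkn {n : ℕ} (k : ℕ) (x : V n) : V n := fun b => (qbinom n k)⁻¹ * Ediv k (Fdiv k x) b

/-- The Jones-Wenzl projector p_n = ∑_k p_{k,n} 1_{-n+2k}. -/
def JW {n : ℕ} (x : V n) : V n :=
  ∑ k ∈ Finset.range (n + 1), pkn k (proj (-(n : ℤ) + 2 * k) x)



set_option synthInstance.maxHeartbeats 1000000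
set_option maxHeartbeats 1000000
set_option maxRecDepth 10000
set_option linter.all false

section Aux





lemma qne : (q : Fq) ≠ 0 := by
  simpa [q, ← RatFunc.algebraMap_X] using
    (map_ne_zero_iff _ (RatFunc.algebraMap_injective ℂ)).2 Polynomial.X_ne_zero

lemma qpow_ne_one (N : ℕ) (hN : N ≠ 0) : q ^ N ≠ 1 := by
  intro h
  have : (Polynomial.X : Polynomial ℂ) ^ N = 1 := by
    apply RatFunc.algebraMap_injective ℂ
    simpa [q, ← RatFunc.algebraMap_X, map_pow] using h
  have := congrArg Polynomial.natDegree this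
  simp [Polynomial.natDegree_X_pow] at this
  exact hN this

lemma br_ne (a : ℤ) (ha : 0 < a) : q ^ a - q ^ (-a) ≠ 0 := by
  intro h
  have h1 : q ^ a = q ^ (-a) := sub_eq_zero.1 h
  have h2 : q ^ (2 * a) = 1 := by
    have h0 : q ^ (2 * a) = q ^ a * q ^ a := by rw [← zpow_add₀ qne]; ring_nf
    rw [h0]; nth_rewrite 1 [h1]
    rw [← zpow_add₀ qne, neg_add_cancel, zpow_zero]
  have h3 : q ^ ((2 * a).toNat) = 1 := by
    rw [← zpow_natCast, Int.toNat_of_nonneg (by omega)]; exact h2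
  exact qpow_ne_one _ (by omega) h3

lemma hqq : q - q⁻¹ ≠ 0 := by
  have := br_ne 1 one_pos
  simpa [zpow_one] using this

def qiz (a : ℤ) : Fq := (q ^ a - q ^ (-a)) / (q - q⁻¹)

lemma qiz_mul_den (a : ℤ) : qiz a * (q - q⁻¹) = q ^ a - q ^ (-a) :=
  div_mul_cancel₀ _ hqq

lemma qiz_neg (a : ℤ) : qiz (-a) = -qiz a := by
  simp [qiz, neg_div]; ring_nf

lemma qiz_ne (a : ℤ) (ha : 0 < a) : qiz a ≠ 0 :=
  div_ne_zero (br_ne a ha) hqq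

lemma qint_eq (m : ℕ) : qint m = qiz m := by
  rw [qiz, eq_div_iff hqq, qint, Finset.sum_mul]
  have h : ∀ j ∈ Finset.range m, q ^ ((m : ℤ) - 2 * j - 1) * (q - q⁻¹)
      = q ^ ((m : ℤ) - 2 * j) - q ^ ((m : ℤ) - 2 * (j + 1 : ℕ)) := by
    intro j hj
    rw [mul_sub, ← zpow_add_one₀ qne, ← zpow_sub_one₀ qne]
    push_cast
    ring_nf
  rw [Finset.sum_congr rfl h, Finset.sum_range_sub' (fun j : ℕ => q ^ ((m : ℤ) - 2 * j))]
  push_cast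
  ring_nf


lemma sum_qiz (J : ℕ) (n : ℤ) :
    ∑ m ∈ Finset.range J, qiz (n - 2 * m) = qiz J * qiz (n - J + 1) := by
  have key : (∑ m ∈ Finset.range J, qiz (n - 2 * m)) * ((q - q⁻¹) * (q - q⁻¹))
      = qiz (J : ℤ) * qiz (n - J + 1) * ((q - q⁻¹) * (q - q⁻¹)) := by
    have rhs : qiz (J : ℤ) * qiz (n - J + 1) * ((q - q⁻¹) * (q - q⁻¹))
        = (q ^ (J:ℤ) - q ^ (-(J:ℤ))) * (q ^ (n - J + 1) - q ^ (-(n - J + 1))) := by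
      have := qiz_mul_den (J : ℤ); have := qiz_mul_den (n - J + 1)
      calc qiz (J : ℤ) * qiz (n - J + 1) * ((q - q⁻¹) * (q - q⁻¹))
          = (qiz (J:ℤ) * (q - q⁻¹)) * (qiz (n - J + 1) * (q - q⁻¹)) := by ring
        _ = _ := by rw [qiz_mul_den, qiz_mul_den]
    rw [rhs, Finset.sum_mul]
    have h : ∀ m ∈ Finset.range J, qiz (n - 2 * m) * ((q - q⁻¹) * (q - q⁻¹))
        = (q ^ (n - 2 * m + 1) - q ^ (n - 2 * (m + 1 : ℕ) + 1))
          + (q ^ (-(n - 2 * (m:ℤ)) - 1) - q ^ (-(n - 2 * (m + 1 : ℕ)) - 1)) := by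
      intro m hm
      have : qiz (n - 2 * m) * ((q - q⁻¹) * (q - q⁻¹))
          = (q ^ (n - 2*m) - q ^ (-(n - 2*m))) * (q - q⁻¹) := by
        rw [← mul_assoc, qiz_mul_den]
      rw [this, sub_mul, mul_sub, mul_sub, ← zpow_add_one₀ qne, ← zpow_sub_one₀ qne,
        ← zpow_add_one₀ qne, ← zpow_sub_one₀ qne]
      push_cast
      ring_nf
    rw [Finset.sum_congr rfl h, Finset.sum_add_distrib,
      Finset.sum_range_sub' (fun m : ℕ => q ^ (n - 2 * m + 1)),
      Finset.sum_range_sub' (fun m : ℕ => q ^ (-(n - 2 * (m:ℤ)) - 1))]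
    rw [sub_mul, mul_sub, mul_sub]
    simp only [← zpow_add₀ qne]
    push_cast
    ring_nf
  have hne := mul_ne_zero hqq hqq
  exact mul_right_cancel₀ hne key



lemma qint_ne (m : ℕ) (hm : 0 < m) : qint m ≠ 0 := by
  rw [qint_eq]; exact qiz_ne _ (by exact_mod_cast hm)

lemma qfact_ne (m : ℕ) : qfact m ≠ 0 :=
  Finset.prod_ne_zero_iff.2 fun j _ => qint_ne _ (Nat.succ_pos j)

lemma qfact_div (n k : ℕ) (hk : k ≤ n) :
    qfact n = qfact (n - k) * ∏ j ∈ Finset.range k, qint (n - j) := by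
  induction k with
  | zero => simp
  | succ k ih =>
    rw [Finset.prod_range_succ, ih (by omega)]
    have h1 : n - k = (n - (k+1)) + 1 := by omega
    rw [h1, qfact, Finset.prod_range_succ, ← qfact]
    have h2 : n - (k+1) + 1 = n - k := by omega
    rw [h2]
    ring

lemma prod_s (n k : ℕ) (hk : k ≤ n) :
    ∏ j ∈ Finset.range k, (∑ m ∈ Finset.range (j + 1), qiz ((n:ℤ) - 2 * m))
      = qbinom n k * qfact k * qfact k := by
  have h : ∀ j ∈ Finset.range k, (∑ m ∈ Finset.range (j + 1), qiz ((n:ℤ) - 2 * m))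
      = qint (j+1) * qint (n - j) := by
    intro j hj
    rw [Finset.mem_range] at hj
    rw [sum_qiz, qint_eq (j+1), qint_eq (n - j)]
    have : (n:ℤ) - ((j+1:ℕ):ℤ) + 1 = ((n-j:ℕ):ℤ) := by omega
    rw [this]
  rw [Finset.prod_congr rfl h, Finset.prod_mul_distrib, ← qfact]
  rw [qbinom, qfact_div n k hk, div_mul_eq_mul_div, div_mul_eq_mul_div,
    eq_div_iff (mul_ne_zero (qfact_ne k) (qfact_ne (n-k)))]
  ring








def Slt {n : ℕ} (b : Fin n → Fin 2) (i : Fin n) : ℤ :=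
  ∑ j ∈ Finset.univ.filter (fun j => j < i), wtc (b j)
def Sgt {n : ℕ} (b : Fin n → Fin 2) (i : Fin n) : ℤ :=
  ∑ j ∈ Finset.univ.filter (fun j => i < j), wtc (b j)

lemma Eop_def {n : ℕ} (x : V n) (b : Fin n → Fin 2) :
    Eop x b = ∑ i : Fin n, if b i = 1 then
      q ^ (-Sgt b i) * x (Function.update b i 0) else 0 := rfl
lemma Fop_def {n : ℕ} (x : V n) (b : Fin n → Fin 2) :
    Fop x b = ∑ i : Fin n, if b i = 0 then
      q ^ (Slt b i) * x (Function.update b i 1) else 0 := rfl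

lemma fin2_cases (a : Fin 2) : a = 0 ∨ a = 1 := by fin_cases a <;> simp

lemma wtc_zero : wtc 0 = -1 := by simp [wtc]
lemma wtc_one : wtc 1 = 1 := by simp [wtc]

lemma sum_wtc_update_mem {n : ℕ} (b : Fin n → Fin 2) (i : Fin n) (v : Fin 2)
    (s : Finset (Fin n)) (hi : i ∈ s) :
    ∑ j ∈ s, wtc (Function.update b i v j)
      = (∑ j ∈ s, wtc (b j)) + (wtc v - wtc (b i)) := by
  have h1 : ∀ j ∈ s, wtc (Function.update b i v j)
      = Function.update (fun j => wtc (b j)) i (wtc v) j := by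
    intro j _
    by_cases hj : j = i
    · subst hj; simp
    · simp [Function.update_of_ne hj]
  have h2 : ∀ j ∈ s, wtc (b j) = Function.update (fun j => wtc (b j)) i (wtc (b i)) j := by
    intro j _
    by_cases hj : j = i
    · subst hj; simp
    · simp [Function.update_of_ne hj]
  rw [Finset.sum_congr rfl h1, Finset.sum_update_of_mem hi]
  conv_rhs => rw [Finset.sum_congr rfl h2, Finset.sum_update_of_mem hi]
  ring

lemma sum_wtc_update_not_mem {n : ℕ} (b : Fin n → Fin 2) (i : Fin n) (v : Fin 2)
    (s : Finset (Fin n)) (hi : i ∉ s) :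
    ∑ j ∈ s, wtc (Function.update b i v j) = ∑ j ∈ s, wtc (b j) := by
  refine Finset.sum_congr rfl fun j hj => ?_
  have : j ≠ i := fun h => hi (h ▸ hj)
  rw [Function.update_of_ne this]

lemma wt_update {n : ℕ} (b : Fin n → Fin 2) (i : Fin n) (v : Fin 2) :
    wt (Function.update b i v) = wt b + (wtc v - wtc (b i)) :=
  sum_wtc_update_mem b i v _ (Finset.mem_univ i)

/-- support predicate -/
def supp {n : ℕ} (μ : ℤ) (x : V n) : Prop := ∀ b, wt b ≠ μ → x b = 0

lemma supp_Eop {n : ℕ} {μ : ℤ} {x : V n} (h : supp μ x) : supp (μ + 2) (Eop x) := by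
  intro b hb
  rw [Eop_def]
  refine Finset.sum_eq_zero fun i _ => ?_
  by_cases hbi : b i = 1
  · rw [if_pos hbi, h _ (by rw [wt_update, hbi, wtc_zero, wtc_one]; omega), mul_zero]
  · rw [if_neg hbi]

lemma supp_Fop {n : ℕ} {μ : ℤ} {x : V n} (h : supp μ x) : supp (μ - 2) (Fop x) := by
  intro b hb
  rw [Fop_def]
  refine Finset.sum_eq_zero fun i _ => ?_
  by_cases hbi : b i = 0
  · rw [if_pos hbi, h _ (by rw [wt_update, hbi, wtc_zero, wtc_one]; omega), mul_zero]
  · rw [if_neg hbi]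

lemma supp_Eop_iter {n : ℕ} {μ : ℤ} {x : V n} (h : supp μ x) (m : ℕ) :
    supp (μ + 2 * m) (Eop^[m] x) := by
  induction m with
  | zero => simpa using h
  | succ m ih =>
    rw [Function.iterate_succ_apply']
    have := supp_Eop ih
    have harg : μ + 2 * m + 2 = μ + 2 * (m + 1 : ℕ) := by push_cast; ring
    rwa [harg] at this

lemma supp_Fop_iter {n : ℕ} {μ : ℤ} {x : V n} (h : supp μ x) (m : ℕ) :
    supp (μ - 2 * m) (Fop^[m] x) := by
  induction m with
  | zero => simpa using h
  | succ m ih =>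
    rw [Function.iterate_succ_apply']
    have := supp_Fop ih
    have harg : μ - 2 * m - 2 = μ - 2 * (m + 1 : ℕ) := by push_cast; ring
    rwa [harg] at this

lemma Eop_smul {n : ℕ} (c : Fq) (x : V n) : Eop (c • x) = c • Eop x := by
  funext b
  simp only [Eop_def, Pi.smul_apply, smul_eq_mul, Finset.mul_sum]
  refine Finset.sum_congr rfl fun i _ => ?_
  by_cases hbi : b i = 1 <;> simp [hbi] <;> ring

lemma Fop_smul {n : ℕ} (c : Fq) (x : V n) : Fop (c • x) = c • Fop x := by
  funext b
  simp only [Fop_def, Pi.smul_apply, smul_eq_mul, Finset.mul_sum]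
  refine Finset.sum_congr rfl fun i _ => ?_
  by_cases hbi : b i = 0 <;> simp [hbi] <;> ring

lemma Eop_iter_smul {n : ℕ} (m : ℕ) (c : Fq) (x : V n) :
    Eop^[m] (c • x) = c • Eop^[m] x := by
  induction m with
  | zero => rfl
  | succ m ih => rw [Function.iterate_succ_apply', Function.iterate_succ_apply', ih, Eop_smul]

lemma Fop_iter_smul {n : ℕ} (m : ℕ) (c : Fq) (x : V n) :
    Fop^[m] (c • x) = c • Fop^[m] x := by
  induction m with
  | zero => rfl
  | succ m ih => rw [Function.iterate_succ_apply', Function.iterate_succ_apply', ih, Fop_smul]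

/-- lowest-weight basis vector -/
def b0 (n : ℕ) : Fin n → Fin 2 := fun _ => 0
def delta (n : ℕ) : V n := fun b => if b = b0 n then 1 else 0

lemma wt_b0 (n : ℕ) : wt (b0 n) = -n := by
  simp [wt, b0, wtc]

lemma wt_eq_iff {n : ℕ} (b : Fin n → Fin 2) : wt b = -n ↔ b = b0 n := by
  constructor
  · intro h
    have h2 : ∑ i : Fin n, ((b i : ℤ)) = 0 := by
      have : wt b = 2 * (∑ i : Fin n, ((b i : ℤ))) - n := by
        simp [wt, wtc, Finset.sum_sub_distrib, Finset.mul_sum]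
      omega
    funext i
    have hnn : ∀ j ∈ Finset.univ, (0:ℤ) ≤ (b j : ℤ) := fun j _ => Int.ofNat_nonneg _
    have := (Finset.sum_eq_zero_iff_of_nonneg hnn).1 h2 i (Finset.mem_univ i)
    rcases fin2_cases (b i) with h | h
    · rw [h]; rfl
    · rw [h] at this; simp at this
  · intro h; rw [h, wt_b0]

lemma supp_delta (n : ℕ) : supp (-(n:ℤ)) (delta n) := by
  intro b hb
  rw [delta, if_neg]
  intro h
  exact hb ((wt_eq_iff b).2 h)

lemma supp_b0 {n : ℕ} {x : V n} (h : supp (-(n:ℤ)) x) : x = x (b0 n) • delta n := by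
  funext b
  by_cases hb : b = b0 n
  · subst hb; simp [delta]
  · rw [h b (fun hw => hb ((wt_eq_iff b).1 hw))]
    simp [delta, hb]

lemma Fop_delta (n : ℕ) : Fop (delta n) = 0 := by
  funext b
  rw [Fop_def]
  refine Finset.sum_eq_zero fun i _ => ?_
  by_cases hbi : b i = 0
  · rw [if_pos hbi, delta, if_neg, mul_zero]
    intro h
    have := congrFun h i
    simp [b0] at this
  · rw [if_neg hbi]









lemma Slt_update_of_le (b : Fin n → Fin 2) {i i' : Fin n} (v : Fin 2) (h : i' ≤ i) :
    Slt (Function.update b i v) i' = Slt b i' := by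
  apply sum_wtc_update_not_mem
  simp only [Finset.mem_filter, Finset.mem_univ, true_and]
  exact fun hlt => absurd h (not_le.2 hlt)

lemma Sgt_update_of_le (b : Fin n → Fin 2) {i i' : Fin n} (v : Fin 2) (h : i ≤ i') :
    Sgt (Function.update b i v) i' = Sgt b i' := by
  apply sum_wtc_update_not_mem
  simp only [Finset.mem_filter, Finset.mem_univ, true_and]
  exact fun hlt => absurd h (not_le.2 hlt)

lemma Slt_update_of_lt (b : Fin n → Fin 2) {i i' : Fin n} (v : Fin 2) (h : i < i') :
    Slt (Function.update b i v) i' = Slt b i' + (wtc v - wtc (b i)) := by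
  apply sum_wtc_update_mem
  simp only [Finset.mem_filter, Finset.mem_univ, true_and]
  exact h

lemma Sgt_update_of_lt (b : Fin n → Fin 2) {i i' : Fin n} (v : Fin 2) (h : i' < i) :
    Sgt (Function.update b i v) i' = Sgt b i' + (wtc v - wtc (b i)) := by
  apply sum_wtc_update_mem
  simp only [Finset.mem_filter, Finset.mem_univ, true_and]
  exact h

lemma wt_partition (b : Fin n → Fin 2) (i : Fin n) :
    Slt b i + wtc (b i) + Sgt b i = wt b := by
  have hset : (Finset.univ.filter (fun j : Fin n => ¬ j < i))
      = insert i (Finset.univ.filter (fun j : Fin n => i < j)) := by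
    ext j
    simp only [Finset.mem_filter, Finset.mem_univ, true_and, Finset.mem_insert]
    constructor
    · intro hj
      rcases lt_trichotomy j i with h | h | h
      · exact absurd h hj
      · exact Or.inl h
      · exact Or.inr h
    · rintro (rfl | hj)
      · exact lt_irrefl _
      · exact fun h2 => absurd (lt_trans h2 hj) (lt_irrefl j ∘ id)
  have := Finset.sum_filter_add_sum_filter_not Finset.univ (fun j : Fin n => j < i)
    (fun j => wtc (b j))
  rw [hset, Finset.sum_insert (by simp)] at this
  rw [wt, ← this, Slt, Sgt]
  ring

/-- telescoping identity -/
lemma telescope (b : Fin n → Fin 2) :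
    ∑ i : Fin n, ((wtc (b i) : Fq)) * q ^ (Slt b i - Sgt b i) = qiz (wt b) := by
  classical
  set PP : ℕ → ℤ := fun m => ∑ j ∈ Finset.univ.filter (fun j : Fin n => (j:ℕ) < m), wtc (b j)
    with hPP
  have hPP0 : PP 0 = 0 := by simp [hPP]
  have hPPn : PP n = wt b := by
    rw [hPP, wt]
    refine Finset.sum_congr ?_ fun _ _ => rfl
    ext j
    simp only [Finset.mem_filter, Finset.mem_univ, true_and]
    exact iff_of_true j.isLt trivial
  have hSlt : ∀ i : Fin n, Slt b i = PP ↑i := by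
    intro i
    rw [hPP, Slt]
    refine Finset.sum_congr ?_ fun _ _ => rfl
    ext j
    simp only [Finset.mem_filter, Finset.mem_univ, true_and]
    exact Fin.lt_def
  have hPPsucc : ∀ i : Fin n, PP (↑i + 1) = PP ↑i + wtc (b i) := by
    intro i
    have hset : (Finset.univ.filter (fun j : Fin n => (j:ℕ) < ↑i + 1))
        = insert i (Finset.univ.filter (fun j : Fin n => (j:ℕ) < ↑i)) := by
      ext j
      simp only [Finset.mem_filter, Finset.mem_univ, true_and, Finset.mem_insert, Fin.ext_iff]
      omega
    rw [hPP]
    simp only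
    rw [hset, Finset.sum_insert (by simp)]
    ring
  have hSgt : ∀ i : Fin n, Sgt b i = wt b - PP (↑i + 1) := by
    intro i
    have h1 := wt_partition b i
    have h2 := hPPsucc i
    have h3 := hSlt i
    omega
  have hq1 : ∀ e : ℤ, q ^ e * q = q ^ (e+1) := fun e => (zpow_add_one₀ qne e).symm
  have hq2 : ∀ e : ℤ, q ^ e * q⁻¹ = q ^ (e-1) := fun e => (zpow_sub_one₀ qne e).symm
  have key : (∑ i : Fin n, ((wtc (b i) : Fq)) * q ^ (Slt b i - Sgt b i)) * (q - q⁻¹)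
      = q ^ (wt b) - q ^ (-(wt b)) := by
    rw [Finset.sum_mul]
    have h1 : ∀ i : Fin n, ((wtc (b i) : Fq)) * q ^ (Slt b i - Sgt b i) * (q - q⁻¹)
        = (fun m : ℕ => q ^ (2 * PP (m+1) - wt b) - q ^ (2 * PP m - wt b)) ↑i := by
      intro i
      simp only
      have e1 : Slt b i - Sgt b i = PP ↑i + PP (↑i+1) - wt b := by
        have := hSlt i; have := hSgt i; omega
      rcases fin2_cases (b i) with h | h
      · have e2 : PP (↑i+1) = PP ↑i - 1 := by rw [hPPsucc i, h, wtc_zero]; ring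
        rw [e1, h, wtc_zero, e2]
        push_cast
        simp only [mul_sub, mul_assoc, hq1, hq2]
        ring_nf
      · have e2 : PP (↑i+1) = PP ↑i + 1 := by rw [hPPsucc i, h, wtc_one]
        rw [e1, h, wtc_one, e2]
        push_cast
        simp only [mul_sub, mul_assoc, hq1, hq2]
        ring_nf
    rw [Finset.sum_congr rfl fun i _ => h1 i,
      Fin.sum_univ_eq_sum_range (fun m : ℕ => q ^ (2 * PP (m+1) - wt b) - q ^ (2 * PP m - wt b)) n,
      Finset.sum_range_sub (fun m : ℕ => q ^ (2 * PP m - wt b)), hPPn, hPP0]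
    ring_nf
  rw [qiz, eq_div_iff hqq, key]









def F2 (x : V n) (b : Fin n → Fin 2) (i j : Fin n) : Fq :=
  if b i = 1 ∧ Function.update b i 0 j = 0 then
    q ^ (-Sgt b i) * (q ^ (Slt (Function.update b i 0) j)
      * x (Function.update (Function.update b i 0) j 1)) else 0

def E2 (x : V n) (b : Fin n → Fin 2) (i j : Fin n) : Fq :=
  if b i = 0 ∧ Function.update b i 1 j = 1 then
    q ^ (Slt b i) * (q ^ (-Sgt (Function.update b i 1) j)
      * x (Function.update (Function.update b i 1) j 0)) else 0

lemma EF_eq (x : V n) (b : Fin n → Fin 2) :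
    Eop (Fop x) b = ∑ i : Fin n, ∑ j : Fin n, F2 x b i j := by
  rw [Eop_def]
  refine Finset.sum_congr rfl fun i _ => ?_
  by_cases hbi : b i = 1
  · rw [if_pos hbi, Fop_def, Finset.mul_sum]
    refine Finset.sum_congr rfl fun j _ => ?_
    by_cases hj : Function.update b i 0 j = 0
    · rw [if_pos hj, F2, if_pos ⟨hbi, hj⟩]
    · rw [if_neg hj, F2, if_neg (fun hc => hj hc.2), mul_zero]
  · rw [if_neg hbi]
    exact (Finset.sum_eq_zero fun j _ => by rw [F2, if_neg (fun hc => hbi hc.1)]).symm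

lemma FE_eq (x : V n) (b : Fin n → Fin 2) :
    Fop (Eop x) b = ∑ i : Fin n, ∑ j : Fin n, E2 x b i j := by
  rw [Fop_def]
  refine Finset.sum_congr rfl fun i _ => ?_
  by_cases hbi : b i = 0
  · rw [if_pos hbi, Eop_def, Finset.mul_sum]
    refine Finset.sum_congr rfl fun j _ => ?_
    by_cases hj : Function.update b i 1 j = 1
    · rw [if_pos hj, E2, if_pos ⟨hbi, hj⟩]
    · rw [if_neg hj, E2, if_neg (fun hc => hj hc.2), mul_zero]
  · rw [if_neg hbi]
    exact (Finset.sum_eq_zero fun j _ => by rw [E2, if_neg (fun hc => hbi hc.1)]).symm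

lemma offdiag (x : V n) (b : Fin n → Fin 2) (i j : Fin n) (hij : j ≠ i) :
    F2 x b i j = E2 x b j i := by
  by_cases h1 : b i = 1
  · by_cases h0 : b j = 0
    · rw [F2, if_pos ⟨h1, by rw [Function.update_of_ne hij]; exact h0⟩,
        E2, if_pos ⟨h0, by rw [Function.update_of_ne (Ne.symm hij)]; exact h1⟩]
      rw [Function.update_comm hij]
      rw [← mul_assoc, ← zpow_add₀ qne, ← mul_assoc, ← zpow_add₀ qne]
      congr 1
      rcases lt_trichotomy i j with hlt | heq | hgt
      · rw [Slt_update_of_lt b 0 hlt, Sgt_update_of_lt b 1 hlt, h1, h0, wtc_zero, wtc_one]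
        ring
      · exact absurd heq.symm hij
      · rw [Slt_update_of_le b 0 (le_of_lt hgt), Sgt_update_of_le b 1 (le_of_lt hgt)]
        ring
    · rw [F2, if_neg, E2, if_neg]
      · exact fun hc => h0 hc.1
      · exact fun hc => h0 (by have h2 := hc.2; rwa [Function.update_of_ne hij] at h2)
  · rw [F2, if_neg (fun hc => h1 hc.1), E2, if_neg]
    exact fun hc => h1 (by have h2 := hc.2; rwa [Function.update_of_ne (Ne.symm hij)] at h2)

lemma F2_diag (x : V n) (b : Fin n → Fin 2) (i : Fin n) :
    F2 x b i i = if b i = 1 then q ^ (Slt b i - Sgt b i) * x b else 0 := by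
  by_cases h : b i = 1
  · rw [F2, if_pos ⟨h, Function.update_self i 0 b⟩, if_pos h,
      Slt_update_of_le b 0 (le_refl i), Function.update_idem]
    have hb : Function.update b i 1 = b := by rw [← h, Function.update_eq_self]
    rw [hb, ← mul_assoc, ← zpow_add₀ qne]
    congr 1
    ring
  · rw [F2, if_neg (fun hc => h hc.1), if_neg h]

lemma E2_diag (x : V n) (b : Fin n → Fin 2) (i : Fin n) :
    E2 x b i i = if b i = 0 then q ^ (Slt b i - Sgt b i) * x b else 0 := by
  by_cases h : b i = 0
  · rw [E2, if_pos ⟨h, Function.update_self i 1 b⟩, if_pos h,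
      Sgt_update_of_le b 1 (le_refl i), Function.update_idem]
    have hb : Function.update b i 0 = b := by rw [← h, Function.update_eq_self]
    rw [hb, ← mul_assoc, ← zpow_add₀ qne]
    congr 1 <;> ring
  · rw [E2, if_neg (fun hc => h hc.1), if_neg h]

/-- the quantum sl2 commutator relation -/
lemma comm_rel (x : V n) (b : Fin n → Fin 2) :
    Eop (Fop x) b - Fop (Eop x) b = qiz (wt b) * x b := by
  classical
  have hsplitF : ∀ i : Fin n, ∑ j : Fin n, F2 x b i j
      = F2 x b i i + ∑ j ∈ Finset.univ.erase i, F2 x b i j :=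
    fun i => (Finset.add_sum_erase _ _ (Finset.mem_univ i)).symm
  have hsplitE : ∀ i : Fin n, ∑ j : Fin n, E2 x b j i
      = E2 x b i i + ∑ j ∈ Finset.univ.erase i, E2 x b j i :=
    fun i => (Finset.add_sum_erase _ _ (Finset.mem_univ i)).symm
  have hcancel : ∀ i : Fin n, ∑ j ∈ Finset.univ.erase i, F2 x b i j
      = ∑ j ∈ Finset.univ.erase i, E2 x b j i := by
    intro i
    refine Finset.sum_congr rfl fun j hj => ?_
    exact offdiag x b i j (Finset.ne_of_mem_erase hj)
  have hmain : Eop (Fop x) b - Fop (Eop x) b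
      = ∑ i : Fin n, (F2 x b i i - E2 x b i i) := by
    rw [EF_eq, FE_eq, Finset.sum_comm (f := fun i j => E2 x b i j)]
    rw [Finset.sum_congr rfl fun i _ => hsplitF i,
      Finset.sum_congr rfl fun i _ => hsplitE i]
    rw [Finset.sum_add_distrib, Finset.sum_add_distrib,
      Finset.sum_congr rfl fun i _ => hcancel i, Finset.sum_sub_distrib]
    ring
  rw [hmain]
  have hdiag : ∀ i : Fin n, F2 x b i i - E2 x b i i
      = ((wtc (b i) : Fq)) * q ^ (Slt b i - Sgt b i) * x b := by
    intro i
    rw [F2_diag, E2_diag]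
    rcases fin2_cases (b i) with h | h
    · rw [h, if_neg (by simp), if_pos rfl, wtc_zero]
      push_cast
      ring
    · rw [h, if_pos rfl, if_neg (by simp), wtc_one]
      push_cast
      ring
  rw [Finset.sum_congr rfl fun i _ => hdiag i, ← Finset.sum_mul, telescope]









/-- s-scalar: [j][n-j+1] as a sum -/
def sS (n j : ℕ) : Fq := ∑ m ∈ Finset.range j, qiz ((n:ℤ) - 2 * m)

lemma mul_supp_eq {μ : ℤ} {y : V n} (h : supp μ y) :
    (fun b => qiz (wt b) * y b) = qiz μ • y := by
  funext b
  by_cases hb : wt b = μ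
  · rw [hb]; rfl
  · rw [Pi.smul_apply, smul_eq_mul, h b hb, mul_zero, mul_zero]

lemma comm_rel_fun (y : V n) :
    Fop (Eop y) = Eop (Fop y) - fun b => qiz (wt b) * y b := by
  funext b
  have := comm_rel y b
  simp only [Pi.sub_apply]
  linear_combination -this

lemma Eop_zero : Eop (0 : V n) = 0 := by
  funext b
  rw [Eop_def]
  refine Finset.sum_eq_zero fun i _ => ?_
  by_cases h : b i = 1 <;> simp [h]

/-- key step: F (E^[k+1] δ) = s(k+1) • E^[k] δ -/
lemma Fop_Eop_iter_delta (k : ℕ) :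
    Fop (Eop^[k+1] (delta n)) = sS n (k+1) • Eop^[k] (delta n) := by
  induction k with
  | zero =>
    rw [Function.iterate_one, Function.iterate_zero, id_eq]
    rw [comm_rel_fun, Fop_delta, Eop_zero, mul_supp_eq (supp_delta n)]
    rw [zero_sub, ← neg_smul, ← qiz_neg, neg_neg]
    congr 1
    rw [sS, Finset.sum_range_one]
    norm_num
  | succ k ih =>
    rw [Function.iterate_succ_apply' Eop (k+1), comm_rel_fun, ih, Eop_smul,
      ← Function.iterate_succ_apply' Eop k]
    have hsupp : supp (-(n:ℤ) + 2 * (k+1:ℕ)) (Eop^[k+1] (delta n)) :=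
      supp_Eop_iter (supp_delta n) (k+1)
    rw [mul_supp_eq hsupp]
    rw [← sub_smul]
    congr 1
    rw [sS, sS, Finset.sum_range_succ, Finset.sum_range_succ, Finset.sum_range_succ]
    push_cast
    rw [show -(n:ℤ) + 2*((k:ℤ)+1) = -((n:ℤ) - 2*((k:ℤ)+1)) by ring, qiz_neg]
    ring

/-- F^[m] E^[k] δ = (∏_{j<m} s(k-j)) • E^[k-m] δ for m ≤ k -/
lemma Fop_iter_Eop_iter_delta (m : ℕ) :
    ∀ k : ℕ, m ≤ k → Fop^[m] (Eop^[k] (delta n))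
      = (∏ j ∈ Finset.range m, sS n (k - j)) • Eop^[k-m] (delta n) := by
  induction m with
  | zero => intro k _; simp
  | succ m ih =>
    intro k hk
    obtain ⟨k', rfl⟩ : ∃ k', k = k' + 1 := ⟨k - 1, by omega⟩
    rw [Function.iterate_succ_apply Fop m, Fop_Eop_iter_delta k', Fop_iter_smul,
      ih k' (by omega), smul_smul]
    have h1 : ∏ j ∈ Finset.range (m+1), sS n (k' + 1 - j)
        = sS n (k'+1) * ∏ j ∈ Finset.range m, sS n (k' - j) := by
      rw [Finset.prod_range_succ']
      have : ∀ j ∈ Finset.range m, sS n (k' + 1 - (j+1)) = sS n (k' - j) := by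
        intro j _; congr 1; omega
      rw [Finset.prod_congr rfl this, Nat.sub_zero, mul_comm]
    rw [h1]
    congr 2
    omega

lemma FE_delta (k : ℕ) :
    Fop^[k] (Eop^[k] (delta n)) = (∏ j ∈ Finset.range k, sS n (j+1)) • delta n := by
  rw [Fop_iter_Eop_iter_delta k k le_rfl, Nat.sub_self]
  have := Finset.prod_range_reflect (fun j => sS n (j+1)) k
  have h2 : ∀ j ∈ Finset.range k, sS n (k - j) = sS n (k - 1 - j + 1) := by
    intro j hj; rw [Finset.mem_range] at hj; congr 1; omega
  rw [Finset.prod_congr rfl h2, this, Function.iterate_zero, id_eq]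









lemma Ediv_eq {n : ℕ} (k : ℕ) (z : V n) : Ediv k z = (qfact k)⁻¹ • Eop^[k] z := rfl
lemma Fdiv_eq {n : ℕ} (k : ℕ) (z : V n) : Fdiv k z = (qfact k)⁻¹ • Fop^[k] z := rfl


end Aux

/-- Theorem: on the q^{2k-n} weight space of V₁^{⊗n},
E^{(k)}F^{(k)}E^{(k)}F^{(k)} = [n choose k]_q · E^{(k)}F^{(k)}. -/
theorem divided_power_relation (n k : ℕ) (hk : k ≤ n) (x : V n)
    (hx : ∀ b, wt b ≠ 2 * (k : ℤ) - n → x b = 0) :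
    Ediv k (Fdiv k (Ediv k (Fdiv k x))) = fun b => qbinom n k * Ediv k (Fdiv k x) b := by
  have hsy : supp (-(n:ℤ)) (Fop^[k] x) := by
    have h1 : supp (2 * (k:ℤ) - n) x := hx
    have := supp_Fop_iter h1 k
    rwa [show 2 * (k:ℤ) - n - 2 * (k:ℕ) = -(n:ℤ) by push_cast; ring] at this
  have hy : Fop^[k] x = (Fop^[k] x) (b0 n) • delta n := supp_b0 hsy
  have key : Fop^[k] (Eop^[k] (Fop^[k] x))
      = (∏ j ∈ Finset.range k, sS n (j+1)) • Fop^[k] x := by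
    conv_lhs => rw [hy]
    rw [Eop_iter_smul, Fop_iter_smul, FE_delta, smul_smul, mul_comm, ← smul_smul, ← hy]
  have hp : ∏ j ∈ Finset.range k, sS n (j+1) = qbinom n k * qfact k * qfact k := by
    simp only [sS]; exact prod_s n k hk
  have hrhs : (fun b => qbinom n k * Ediv k (Fdiv k x) b) = qbinom n k • Ediv k (Fdiv k x) := rfl
  rw [hrhs]
  simp only [Ediv_eq, Fdiv_eq, Eop_iter_smul, Fop_iter_smul, smul_smul]
  rw [key, Eop_iter_smul, smul_smul]
  congr 1
  rw [hp]
  have hf : qfact k ≠ 0 := qfact_ne k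
  field_simp
end
end

section
/- Let C_n : C(q) → V_1^{⊗2n} be a U_q(sl_2)-intertwiner whose image lies in the invariant submodule. Then for k ≤ n, (E^(k) ⊗ 1) ∘ C_n = (-1)^k q^{-k(k-1)} (1 ⊗ K^k E^(k)) ∘ C_n. -/
noncomputable section

open Finset

/-- V₁^{⊗(n+m)} viewed as V₁^{⊗n} ⊗ V₁^{⊗m}. -/
abbrev W (n m : ℕ) : Type := (Fin n → Fin 2) → (Fin m → Fin 2) → Fq

/-- An operator acting on the first n tensor factors. -/
def opL {n m : ℕ} (f : V n → V n) (x : W n m) : W n m := fun b c => f (fun b' => x b' c) b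

/-- An operator acting on the last m tensor factors. -/
def opR {n m : ℕ} (f : V m → V m) (x : W n m) : W n m := fun b c => f (x b) c

/-- Total action of E on V₁^{⊗n} ⊗ V₁^{⊗m} via Δ(E) = 1⊗E + E⊗K⁻¹. -/
def Etot {n m : ℕ} (x : W n m) : W n m := opR Eop x + opL Eop (opR Kinv x)

/-- Total action of F via Δ(F) = K⊗F + F⊗1. -/
def Ftot {n m : ℕ} (x : W n m) : W n m := opL Kop (opR Fop x) + opL Fop x

/-- Total action of K via Δ(K) = K⊗K. -/
def Ktot {n m : ℕ} (x : W n m) : W n m := opL Kop (opR Kop x)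

/-! Invariance under `E` says `(1 ⊗ E) c + (E ⊗ K⁻¹) c = 0`, i.e.
`(E ⊗ 1) c = -(1 ⊗ KE) c`. Operators on different tensor factors commute, so iterating gives
`(E^k ⊗ 1) c = (-1)^k (1 ⊗ (KE)^k) c`, and the relation `EK = q⁻² KE` reorders `(KE)^k`
into `q^{-k(k-1)} K^k E^k`. Dividing by `[k]!` gives the statement for divided powers. -/

lemma q_ne_zero : q ≠ 0 := RatFunc.X_ne_zero

section QuasiCommute

variable {R A : Type*} [CommSemiring R] [Semiring A] [Algebra R A] {a b : A} {s : R}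

lemma pow_mul_of_mul_eq_smul (h : a * b = s • (b * a)) (k : ℕ) :
    a ^ k * b = s ^ k • (b * a ^ k) := by
  induction k with
  | zero => simp
  | succ k ih =>
    rw [pow_succ, mul_assoc, h, mul_smul_comm, ← mul_assoc, ih, smul_mul_assoc, smul_smul,
      mul_assoc, ← pow_succ, ← pow_succ']

lemma mul_pow_of_mul_eq_smul (h : a * b = s • (b * a)) (k : ℕ) :
    (b * a) ^ k = s ^ k.choose 2 • (b ^ k * a ^ k) := by
  induction k with
  | zero => simp
  | succ k ih =>
    have hchoose : (k + 1).choose 2 = k.choose 2 + k := by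
      simp [Nat.choose_succ_left _ _ two_pos, add_comm]
    rw [pow_succ, ih, smul_mul_assoc, mul_assoc, ← mul_assoc (a ^ k), pow_mul_of_mul_eq_smul h,
      smul_mul_assoc, mul_smul_comm, smul_smul, ← pow_add, hchoose]
    simp only [pow_succ, mul_assoc]

end QuasiCommute

section Generators

variable (n : ℕ)

def Eopₗ : Module.End Fq (V n) where
  toFun := Eop
  map_add' x y := by
    funext b
    simp only [Eop, Pi.add_apply, ← Finset.sum_add_distrib]
    refine Finset.sum_congr rfl fun i _ => ?_
    split_ifs <;> ring
  map_smul' r x := by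
    funext b
    simp only [Eop, Pi.smul_apply, smul_eq_mul, RingHom.id_apply, Finset.mul_sum]
    refine Finset.sum_congr rfl fun i _ => ?_
    split_ifs <;> ring

def Kopₗ : Module.End Fq (V n) where
  toFun := Kop
  map_add' x y := by funext b; simp only [Kop, Pi.add_apply]; ring
  map_smul' r x := by funext b; simp only [Kop, Pi.smul_apply, smul_eq_mul, RingHom.id_apply]; ring

def Kinvₗ : Module.End Fq (V n) where
  toFun := Kinv
  map_add' x y := by funext b; simp only [Kinv, Pi.add_apply]; ring
  map_smul' r x := by funext b; simp only [Kinv, Pi.smul_apply, smul_eq_mul, RingHom.id_apply]; ring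

lemma Kopₗ_mul_Kinvₗ : Kopₗ n * Kinvₗ n = 1 := by
  ext x b
  simp [Kopₗ, Kinvₗ, Kop, Kinv, ← mul_assoc, mul_inv_cancel₀ (zpow_ne_zero _ q_ne_zero)]

lemma wt_update_of_eq_one {b : Fin n → Fin 2} {i : Fin n} (h : b i = 1) :
    wt (Function.update b i 0) = wt b - 2 := by
  simp only [wt, Function.apply_update (fun _ => wtc),
    Finset.sum_update_of_mem (Finset.mem_univ i)]
  rw [← Finset.add_sum_erase _ _ (Finset.mem_univ i), h, Finset.sdiff_singleton_eq_erase,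
    show wtc 0 = wtc 1 - 2 by decide]
  ring

lemma Eopₗ_mul_Kopₗ : Eopₗ n * Kopₗ n = q ^ (-2 : ℤ) • (Kopₗ n * Eopₗ n) := by
  refine LinearMap.ext fun x => funext fun b => ?_
  simp only [Module.End.mul_apply, LinearMap.smul_apply, Pi.smul_apply, smul_eq_mul, Eopₗ, Kopₗ,
    LinearMap.coe_mk, AddHom.coe_mk, Eop, Kop, Finset.mul_sum]
  refine Finset.sum_congr rfl fun i _ => ?_
  split_ifs with h
  · rw [wt_update_of_eq_one n h, sub_eq_add_neg, zpow_add₀ q_ne_zero]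
    ring
  · simp

lemma Kopₗ_mul_Eopₗ_pow (k : ℕ) :
    (Kopₗ n * Eopₗ n) ^ k = q ^ (-((k * (k - 1) : ℕ) : ℤ)) • (Kopₗ n ^ k * Eopₗ n ^ k) := by
  rw [mul_pow_of_mul_eq_smul (Eopₗ_mul_Kopₗ n), ← zpow_natCast, ← zpow_mul, Nat.choose_two_right]
  obtain ⟨r, hr⟩ := Nat.even_mul_pred_self k
  congr 2
  omega

lemma Ediv_eq_coe (k : ℕ) : Ediv (n := n) k = ⇑((qfact k)⁻¹ • Eopₗ n ^ k) := by
  funext x b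
  simp only [Ediv, LinearMap.smul_apply, Module.End.coe_pow, Pi.smul_apply, smul_eq_mul]
  rfl

lemma Kop_iterate_eq_coe (k : ℕ) : Kop^[k] = ⇑(Kopₗ n ^ k) :=
  (Module.End.coe_pow (Kopₗ n) k).symm

end Generators

section TensorProduct

variable {n m : ℕ}

lemma opL_smul (f : Module.End Fq (V n)) (s : Fq) (x : W n m) :
    opL f (s • x) = s • opL f x := by
  funext b c
  exact congrFun (f.map_smul s fun b' => x b' c) b

lemma opR_neg (g : Module.End Fq (V m)) (x : W n m) : opR g (-x) = -opR g x := by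
  funext b
  exact g.map_neg (x b)

lemma opL_eq_toMatrix'_mul (f : Module.End Fq (V n)) (x : W n m) :
    opL f x = (LinearMap.toMatrix' f * Matrix.of x : Matrix _ _ Fq) := by
  funext b c
  rw [opL, ← LinearMap.toMatrix'_mulVec f]
  rfl

lemma opR_eq_mul_toMatrix'_transpose (g : Module.End Fq (V m)) (x : W n m) :
    opR g x = (Matrix.of x * (LinearMap.toMatrix' g).transpose : Matrix _ _ Fq) := by
  funext b c
  rw [opR, ← LinearMap.toMatrix'_mulVec g, Matrix.mulVec, Matrix.mul_apply, dotProduct]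
  exact Finset.sum_congr rfl fun c' _ => mul_comm _ _

lemma opL_opR_comm (f : Module.End Fq (V n)) (g : Module.End Fq (V m)) (x : W n m) :
    opL f (opR g x) = opR g (opL f x) := by
  rw [opL_eq_toMatrix'_mul, opR_eq_mul_toMatrix'_transpose, opR_eq_mul_toMatrix'_transpose,
    opL_eq_toMatrix'_mul]
  exact (Matrix.mul_assoc _ _ _).symm

lemma opL_Eop_eq_neg_of_Etot_eq_zero {c : W n m} (hE : Etot c = 0) :
    opL Eop c = -opR ⇑(Kopₗ m * Eopₗ m) c := by
  have hE' : opR (Kinvₗ m) (opL (Eopₗ n) c) = -opR (Eopₗ m) c :=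
    eq_neg_of_add_eq_zero_right (by rw [← opL_opR_comm]; exact hE)
  calc opL Eop c = opR ⇑(Kopₗ m * Kinvₗ m) (opL (Eopₗ n) c) := by rw [Kopₗ_mul_Kinvₗ]; rfl
    _ = opR (Kopₗ m) (-opR (Eopₗ m) c) := by rw [← hE']; rfl
    _ = -opR ⇑(Kopₗ m * Eopₗ m) c := opR_neg _ _

lemma opL_Eop_pow_of_Etot_eq_zero {c : W n m} (hE : Etot c = 0) (k : ℕ) :
    opL ⇑(Eopₗ n ^ k) c = (-1 : Fq) ^ k • opR ⇑((Kopₗ m * Eopₗ m) ^ k) c := by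
  induction k with
  | zero => rw [pow_zero, pow_zero, one_smul]; rfl
  | succ k ih =>
    calc opL ⇑(Eopₗ n ^ (k + 1)) c = opL (Eopₗ n) (opL ⇑(Eopₗ n ^ k) c) := by
          rw [pow_succ']; rfl
      _ = (-1 : Fq) ^ k • opR ⇑((Kopₗ m * Eopₗ m) ^ k) (opL Eop c) := by
          rw [ih, opL_smul, opL_opR_comm]; rfl
      _ = (-1 : Fq) ^ (k + 1) • opR ⇑((Kopₗ m * Eopₗ m) ^ (k + 1)) c := by
          rw [opL_Eop_eq_neg_of_Etot_eq_zero hE, opR_neg, pow_succ, pow_succ, smul_neg,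
            mul_neg_one, neg_smul]
          rfl

end TensorProduct

theorem E_divided_power_slide_general (n k : ℕ) (c : W n n) (hE : Etot c = 0) :
    opL (Ediv k) c =
      fun b b' => (-1 : Fq) ^ k * q ^ (-((k * (k - 1) : ℕ) : ℤ)) *
        opR (fun y => Kop^[k] (Ediv k y)) c b b' := by
  have hslide := opL_Eop_pow_of_Etot_eq_zero hE k
  rw [Kopₗ_mul_Eopₗ_pow] at hslide
  funext b b'
  have h := congrFun (congrFun hslide b) b'
  simp only [Ediv_eq_coe, Kop_iterate_eq_coe, opL, opR, LinearMap.smul_apply, Pi.smul_apply,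
    smul_eq_mul, Module.End.mul_apply, map_smul] at h ⊢
  rw [h]
  ring

/-- Theorem (E-slide along nested cups): if c = C_n(1) is an invariant vector of
V₁^{⊗n} ⊗ V₁^{⊗n}, then (E^{(k)} ⊗ 1) c = (-1)^k q^{-k(k-1)} (1 ⊗ K^k E^{(k)}) c for k ≤ n. -/
theorem E_divided_power_slide (n k : ℕ) (hk : k ≤ n) (c : W n n)
    (hE : Etot c = 0) (hF : Ftot c = 0) (hK : Ktot c = c) :
    opL (Ediv k) c =
      fun b b' => (-1 : Fq) ^ k * q ^ (-((k * (k - 1) : ℕ) : ℤ)) *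
        opR (fun y => Kop^[k] (Ediv k y)) c b b' :=
  E_divided_power_slide_general n k c hE
end
end
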